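/- Let q ∈ (0, 2], let T be an infinite tree in which every vertex has finite degree, and let S be a nonempty finite vertex subset of T with S ∩ A_q = ∅. Then (q + 2) times the number of edges of T joining a vertex of S to a vertex of T ∖ (S ∪ A_q) is at least q times the sum of the degrees in T of the vertices of S; in other words, the q-oceans T ∖ A_q satisfy the isoperimetric inequality |∂^{T∖A_q} S| ≥ (q/(q+2)) · Σ_{x∈S} deg_T(x), where ∂^{T∖A_q} S denotes the set of edges of T from S to T ∖ (S ∪ A_q). -/

import Mathlib

open SimpleGraph

variable {V : Type*}

/-- The edge boundary `∂S` of a vertex set `S`: the set of edges of `G` with one endpoint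
in `S` and the other endpoint outside `S`. -/
def edgeBdry (G : SimpleGraph V) (S : Set V) : Set (Sym2 V) :=
  {e | e ∈ G.edgeSet ∧ ∃ x ∈ S, ∃ y ∉ S, e = s(x, y)}

/-- The `q`-isolation `Δ_q S := q·|S| − |∂S|` of a vertex set `S`. -/
noncomputable def isolation (G : SimpleGraph V) (q : ℝ) (S : Set V) : ℝ :=
  q * (S.ncard : ℝ) - ((edgeBdry G S).ncard : ℝ)

/-- A finite vertex set `S` is a `q`-isolated core if `Δ_q S > Δ_q A` for every
proper subset `A ⊊ S`. -/
def IsIsolatedCore (G : SimpleGraph V) (q : ℝ) (S : Set V) : Prop :=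
  S.Finite ∧ ∀ A : Set V, A ⊂ S → isolation G q A < isolation G q S

/-- `A_q`: the union of all `q`-isolated cores of `G`. -/
def coreUnion (G : SimpleGraph V) (q : ℝ) : Set V :=
  ⋃₀ {S : Set V | IsIsolatedCore G q S}

/-- A `q`-island: a connected component of (the subgraph of `G` induced by) `A_q`,
characterised as a nonempty connected subset of `A_q` which is closed under
adjacency within `A_q`. -/
def IsIsland (G : SimpleGraph V) (q : ℝ) (C : Set V) : Prop :=
  C ⊆ coreUnion G q ∧ (G.induce C).Connected ∧
    ∀ x ∈ C, ∀ y ∈ coreUnion G q, G.Adj x y → y ∈ C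

/-- The anchored expansion constant
`i(G) = lim_{n→∞} inf { |∂K|/|K| : o ∈ K ⊆ G connected, n ≤ |K| < ∞ }`;
since the infima are nondecreasing in `n`, the limit equals the supremum over `n`. -/
noncomputable def anchoredExpansion (G : SimpleGraph V) (o : V) : ℝ :=
  ⨆ n : ℕ, sInf {r : ℝ | ∃ K : Set V, o ∈ K ∧ K.Finite ∧ (G.induce K).Connected ∧
    n ≤ K.ncard ∧ r = ((edgeBdry G K).ncard : ℝ) / (K.ncard : ℝ)}

/-- The set of children of a vertex `x` in the tree rooted at `o`: the neighbours of `x`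
at larger graph distance from the root. -/
def children (G : SimpleGraph V) (o x : V) : Set V :=
  {y | G.Adj x y ∧ G.dist o y = G.dist o x + 1}

/-!
Since `Δ_q` is supermodular, adjoining a core never decreases `Δ_q`, and among the subsets of a
finite set a maximiser of `Δ_q` of least cardinality is a core. The `A_q`-neighbours of `S` lie
in a finite union `U` of cores; with `M` such a core maximiser inside `S ∪ U`, the set
`A = M ∪ U ⊆ A_q` satisfies `Δ_q (A ∪ S) ≤ Δ_q A`, which unpacks to
`q |S| + 2 |E(S, A_q)| ≤ |∂S|`. Since `S` spans a forest, `Σ_{x ∈ S} deg x ≤ 2 |S| + |∂S|`;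
splitting `∂S` into the edges to the oceans and to `A_q` and using `q ≤ 2` gives the inequality.
-/

lemma Set.ncard_add_ncard_le_of_union_subset_of_inter_subset {α : Type*} {X Y Z W : Set α}
    (hZ : Z.Finite) (hW : W.Finite) (hu : X ∪ Y ⊆ Z ∪ W) (hi : X ∩ Y ⊆ Z ∩ W) :
    X.ncard + Y.ncard ≤ Z.ncard + W.ncard := by
  have hXY : (X ∪ Y).Finite := (hZ.union hW).subset hu
  rw [← Set.ncard_union_add_ncard_inter X Y (hXY.subset Set.subset_union_left)
      (hXY.subset Set.subset_union_right), ← Set.ncard_union_add_ncard_inter Z W hZ hW]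
  exact add_le_add (Set.ncard_le_ncard hu (hZ.union hW))
    (Set.ncard_le_ncard hi (hZ.inter_of_left W))

namespace SimpleGraph

variable {G : SimpleGraph V}

lemma IsAcyclic.card_edgeSet_le [Finite V] (h : G.IsAcyclic) :
    Nat.card G.edgeSet ≤ Nat.card V := by
  cases isEmpty_or_nonempty V
  · simp
  obtain ⟨F, hGF, -, hF⟩ := connected_top.exists_isTree_le_of_le_of_isAcyclic le_top h
  have := Fintype.ofFinite V
  classical
  calc Nat.card G.edgeSet ≤ Nat.card F.edgeSet :=
        Nat.card_mono (Set.toFinite _) (edgeSet_mono hGF)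
    _ ≤ Nat.card V := by
        simp only [Nat.card_eq_fintype_card, ← hF.card_edgeFinset, ← edgeFinset_card]
        omega

lemma sum_ncard_neighborSet_inter_self {S : Set V} (hS : S.Finite) :
    ∑ x ∈ hS.toFinset, (G.neighborSet x ∩ S).ncard = 2 * Nat.card (G.induce S).edgeSet := by
  have := hS.fintype
  classical
  rw [Nat.card_eq_fintype_card, ← edgeFinset_card, ← sum_degrees_eq_twice_card_edges,
    Finset.sum_subtype _ (fun _ => hS.mem_toFinset)]
  refine Finset.sum_congr rfl fun v _ => ?_
  rw [← card_neighborSet_eq_degree, ← Nat.card_eq_fintype_card, Nat.card_coe_set_eq,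
    neighborSet_induce, Set.inter_comm, ← Subtype.image_preimage_coe,
    Set.ncard_image_of_injective _ Subtype.val_injective]

lemma IsAcyclic.sum_ncard_neighborSet_inter_self_le (h : G.IsAcyclic) {S : Set V}
    (hS : S.Finite) : ∑ x ∈ hS.toFinset, (G.neighborSet x ∩ S).ncard ≤ 2 * S.ncard := by
  have := hS.to_subtype
  rw [sum_ncard_neighborSet_inter_self hS, ← Nat.card_coe_set_eq]
  exact Nat.mul_le_mul_left 2 (h.induce S).card_edgeSet_le

end SimpleGraph

section

variable {G : SimpleGraph V} {q : ℝ}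

def edgesBetween (G : SimpleGraph V) (A B : Set V) : Set (Sym2 V) :=
  {e | e ∈ G.edgeSet ∧ ∃ x ∈ A, ∃ y ∈ B, e = s(x, y)}

lemma edgeBdry_eq_edgesBetween_compl (S : Set V) : edgeBdry G S = edgesBetween G S Sᶜ := rfl

lemma mk_mem_edgesBetween {A B : Set V} {u v : V} :
    s(u, v) ∈ edgesBetween G A B ↔
      G.Adj u v ∧ (u ∈ A ∧ v ∈ B ∨ v ∈ A ∧ u ∈ B) := by
  simp only [edgesBetween, Set.mem_ofPred_eq, mem_edgeSet, Sym2.eq_iff]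
  constructor
  · rintro ⟨h, x, hx, y, hy, ⟨rfl, rfl⟩ | ⟨rfl, rfl⟩⟩
    exacts [⟨h, .inl ⟨hx, hy⟩⟩, ⟨h, .inr ⟨hx, hy⟩⟩]
  · rintro ⟨h, ⟨hu, hv⟩ | ⟨hv, hu⟩⟩
    exacts [⟨h, u, hu, v, hv, .inl ⟨rfl, rfl⟩⟩, ⟨h, v, hv, u, hu, .inr ⟨rfl, rfl⟩⟩]

lemma mk_mem_edgeBdry {S : Set V} {u v : V} :
    s(u, v) ∈ edgeBdry G S ↔ G.Adj u v ∧ ¬(u ∈ S ↔ v ∈ S) := by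
  rw [edgeBdry_eq_edgesBetween_compl, mk_mem_edgesBetween]
  tauto

lemma edgesBetween_eq_biUnion (A B : Set V) :
    edgesBetween G A B = ⋃ x ∈ A, (fun y => s(x, y)) '' (G.neighborSet x ∩ B) := by
  ext e
  simp only [edgesBetween, Set.mem_ofPred_eq, Set.mem_iUnion, Set.mem_image, Set.mem_inter_iff,
    mem_neighborSet, exists_prop]
  constructor
  · rintro ⟨he, x, hx, y, hy, rfl⟩
    exact ⟨x, hx, y, ⟨he, hy⟩, rfl⟩
  · rintro ⟨x, hx, y, ⟨hxy, hy⟩, rfl⟩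
    exact ⟨hxy, x, hx, y, hy, rfl⟩

lemma edgesBetween_finite (hloc : ∀ v : V, (G.neighborSet v).Finite) {A : Set V}
    (hA : A.Finite) (B : Set V) : (edgesBetween G A B).Finite := by
  rw [edgesBetween_eq_biUnion]
  exact hA.biUnion fun x _ => ((hloc x).inter_of_left B).image _

lemma edgeBdry_finite (hloc : ∀ v : V, (G.neighborSet v).Finite) {S : Set V}
    (hS : S.Finite) : (edgeBdry G S).Finite :=
  edgesBetween_finite hloc hS Sᶜ

lemma edgeBdry_subset_union_edgesBetween (S A : Set V) :
    edgeBdry G S ⊆ edgesBetween G S (S ∪ A)ᶜ ∪ edgesBetween G S A := by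
  rintro _ ⟨he, x, hx, y, hy, rfl⟩
  by_cases hyA : y ∈ A
  · exact .inr ⟨he, x, hx, y, hyA, rfl⟩
  · exact .inl ⟨he, x, hx, y, fun h => h.elim hy hyA, rfl⟩

lemma ncard_edgesBetween_of_disjoint (hloc : ∀ v : V, (G.neighborSet v).Finite) {A B : Set V}
    (hA : A.Finite) (hAB : Disjoint A B) :
    (edgesBetween G A B).ncard = ∑ x ∈ hA.toFinset, (G.neighborSet x ∩ B).ncard := by
  have hdisj : A.PairwiseDisjoint fun x => (fun y => s(x, y)) '' (G.neighborSet x ∩ B) := by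
    rintro x hx x' hx' hne
    refine Set.disjoint_left.mpr ?_
    rintro _ ⟨y, ⟨-, hy⟩, rfl⟩ ⟨y', ⟨-, hy'⟩, hyy'⟩
    rcases Sym2.eq_iff.mp hyy' with ⟨rfl, -⟩ | ⟨rfl, -⟩
    exacts [hne rfl, hAB.notMem_of_mem_left hx' hy]
  rw [edgesBetween_eq_biUnion, hA.ncard_biUnion (fun x _ => ((hloc x).inter_of_left B).image _)
    hdisj, finsum_mem_eq_finite_toFinset_sum _ hA]
  exact Finset.sum_congr rfl fun x _ =>
    Set.ncard_image_of_injective _ fun y y' h => Sym2.congr_right.mp h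

lemma sum_ncard_neighborSet_le_of_isAcyclic (hloc : ∀ v : V, (G.neighborSet v).Finite)
    (hG : G.IsAcyclic) {S : Set V} (hS : S.Finite) :
    ∑ x ∈ hS.toFinset, (G.neighborSet x).ncard ≤ 2 * S.ncard + (edgeBdry G S).ncard := by
  rw [edgeBdry_eq_edgesBetween_compl, ncard_edgesBetween_of_disjoint hloc hS disjoint_compl_right]
  calc ∑ x ∈ hS.toFinset, (G.neighborSet x).ncard
      = ∑ x ∈ hS.toFinset, ((G.neighborSet x ∩ S).ncard + (G.neighborSet x ∩ Sᶜ).ncard) :=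
        Finset.sum_congr rfl fun x _ =>
          (Set.ncard_inter_add_ncard_sdiff_eq_ncard _ S (hloc x)).symm
    _ ≤ _ := by
        rw [Finset.sum_add_distrib]
        exact Nat.add_le_add_right (hG.sum_ncard_neighborSet_inter_self_le hS) _

lemma ncard_edgeBdry_union_add_inter_le (hloc : ∀ v : V, (G.neighborSet v).Finite)
    {A B : Set V} (hA : A.Finite) (hB : B.Finite) :
    (edgeBdry G (A ∪ B)).ncard + (edgeBdry G (A ∩ B)).ncard ≤
      (edgeBdry G A).ncard + (edgeBdry G B).ncard := by
  refine Set.ncard_add_ncard_le_of_union_subset_of_inter_subset (edgeBdry_finite hloc hA)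
    (edgeBdry_finite hloc hB) ?_ ?_ <;>
  · rintro e he
    induction e using Sym2.ind with
    | _ u v =>
      simp only [Set.mem_union, Set.mem_inter_iff, mk_mem_edgeBdry] at he ⊢
      tauto

lemma ncard_edgeBdry_union_add_two_mul_le (hloc : ∀ v : V, (G.neighborSet v).Finite)
    {A S : Set V} (hA : A.Finite) (hS : S.Finite) (hAS : Disjoint A S) :
    (edgeBdry G (A ∪ S)).ncard + 2 * (edgesBetween G S A).ncard ≤
      (edgeBdry G A).ncard + (edgeBdry G S).ncard := by
  have hdisj : Disjoint (edgeBdry G (A ∪ S)) (edgesBetween G S A) := by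
    refine Set.disjoint_left.mpr fun e he he' => ?_
    induction e using Sym2.ind with
    | _ u v =>
      simp only [mk_mem_edgeBdry, mk_mem_edgesBetween, Set.mem_union] at he he'
      tauto
  have key : (edgeBdry G (A ∪ S) ∪ edgesBetween G S A).ncard + (edgesBetween G S A).ncard ≤
      (edgeBdry G A).ncard + (edgeBdry G S).ncard := by
    refine Set.ncard_add_ncard_le_of_union_subset_of_inter_subset (edgeBdry_finite hloc hA)
      (edgeBdry_finite hloc hS) ?_ ?_ <;>
    · rintro e he
      induction e using Sym2.ind with
      | _ u v =>
        simp only [Set.mem_union, Set.mem_inter_iff, mk_mem_edgeBdry, mk_mem_edgesBetween]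
          at he ⊢
        have hu : u ∈ A → u ∉ S := fun h => Set.disjoint_left.mp hAS h
        have hv : v ∈ A → v ∉ S := fun h => Set.disjoint_left.mp hAS h
        tauto
  rw [Set.ncard_union_eq hdisj (edgeBdry_finite hloc (hA.union hS))
    (edgesBetween_finite hloc hS A)] at key
  omega

lemma isolation_add_isolation_le (hloc : ∀ v : V, (G.neighborSet v).Finite) {A B : Set V}
    (hA : A.Finite) (hB : B.Finite) :
    isolation G q A + isolation G q B ≤ isolation G q (A ∪ B) + isolation G q (A ∩ B) := by
  have hcard : ((A ∪ B).ncard : ℝ) + (A ∩ B).ncard = A.ncard + B.ncard := by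
    exact_mod_cast Set.ncard_union_add_ncard_inter A B hA hB
  have hbdry : ((edgeBdry G (A ∪ B)).ncard : ℝ) + (edgeBdry G (A ∩ B)).ncard ≤
      (edgeBdry G A).ncard + (edgeBdry G B).ncard := by
    exact_mod_cast ncard_edgeBdry_union_add_inter_le hloc hA hB
  simp only [isolation]
  linear_combination -q * hcard + hbdry

lemma mul_ncard_add_two_mul_ncard_edgesBetween_le_of_isolation_union_le
    (hloc : ∀ v : V, (G.neighborSet v).Finite) {A S : Set V}
    (hA : A.Finite) (hS : S.Finite) (hAS : Disjoint A S)
    (h : isolation G q (A ∪ S) ≤ isolation G q A) :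
    q * S.ncard + 2 * (edgesBetween G S A).ncard ≤ (edgeBdry G S).ncard := by
  have hcard : ((A ∪ S).ncard : ℝ) = A.ncard + S.ncard := by
    exact_mod_cast Set.ncard_union_eq hAS hA hS
  have hbdry : ((edgeBdry G (A ∪ S)).ncard : ℝ) + 2 * (edgesBetween G S A).ncard ≤
      (edgeBdry G A).ncard + (edgeBdry G S).ncard := by
    exact_mod_cast ncard_edgeBdry_union_add_two_mul_le hloc hA hS hAS
  simp only [isolation, hcard] at h
  linarith

lemma IsIsolatedCore.subset_coreUnion {X : Set V} (hX : IsIsolatedCore G q X) :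
    X ⊆ coreUnion G q :=
  Set.subset_sUnion_of_mem hX

lemma IsIsolatedCore.isolation_le_of_subset {X A : Set V} (hX : IsIsolatedCore G q X)
    (hA : A ⊆ X) : isolation G q A ≤ isolation G q X := by
  rcases hA.ssubset_or_eq with h | rfl
  · exact (hX.2 A h).le
  · rfl

lemma IsIsolatedCore.isolation_le_union (hloc : ∀ v : V, (G.neighborSet v).Finite) {X A : Set V}
    (hX : IsIsolatedCore G q X) (hA : A.Finite) :
    isolation G q A ≤ isolation G q (A ∪ X) := by
  have := isolation_add_isolation_le (q := q) hloc hA hX.1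
  have := hX.isolation_le_of_subset (Set.inter_subset_right (s := A))
  linarith

lemma exists_isIsolatedCore_forall_isolation_le {W : Set V} (hW : W.Finite) :
    ∃ M ⊆ W, IsIsolatedCore G q M ∧ ∀ B ⊆ W, isolation G q B ≤ isolation G q M := by
  obtain ⟨M₀, hM₀W, hM₀⟩ := Set.exists_max_image {B | B ⊆ W} (isolation G q)
    hW.finite_subsets ⟨∅, Set.empty_subset W⟩
  obtain ⟨M, ⟨hMW, hMM₀⟩, hM⟩ := Set.exists_min_image
    {B | B ⊆ W ∧ isolation G q B = isolation G q M₀} Set.ncard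
    (hW.finite_subsets.subset fun _ hB => hB.1) ⟨M₀, hM₀W, rfl⟩
  have hmax : ∀ B ⊆ W, isolation G q B ≤ isolation G q M := fun B hB => hMM₀ ▸ hM₀ B hB
  refine ⟨M, hMW, ⟨hW.subset hMW, fun B hBM => ?_⟩, hmax⟩
  refine (hmax B (hBM.subset.trans hMW)).lt_of_ne fun hBeq => ?_
  have := hM B ⟨hBM.subset.trans hMW, hBeq.trans hMM₀⟩
  exact (Set.ncard_lt_ncard hBM (hW.subset hMW)).not_ge this

lemma exists_finite_superset_forall_isolation_le_union
    (hloc : ∀ v : V, (G.neighborSet v).Finite) {F : Set V} (hF : F.Finite)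
    (hFA : F ⊆ coreUnion G q) :
    ∃ U, U.Finite ∧ F ⊆ U ∧ U ⊆ coreUnion G q ∧
      ∀ B : Set V, B.Finite → isolation G q B ≤ isolation G q (B ∪ U) := by
  induction F, hF using Set.Finite.induction_on with
  | empty =>
    exact ⟨∅, Set.finite_empty, subset_rfl, Set.empty_subset _, fun B _ => by
      rw [Set.union_empty]⟩
  | @insert y F _ _ ih =>
    obtain ⟨U, hU, hFU, hUA, hUabs⟩ := ih ((Set.subset_insert y F).trans hFA)
    obtain ⟨X, hX, hyX⟩ := hFA (Set.mem_insert y F)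
    refine ⟨X ∪ U, hX.1.union hU, Set.insert_subset (.inl hyX)
      (hFU.trans Set.subset_union_right), Set.union_subset hX.subset_coreUnion hUA,
      fun B hB => ?_⟩
    calc isolation G q B ≤ isolation G q (B ∪ X) := hX.isolation_le_union hloc hB
      _ ≤ isolation G q (B ∪ X ∪ U) := hUabs _ (hB.union hX.1)
      _ = isolation G q (B ∪ (X ∪ U)) := by rw [Set.union_assoc]

lemma exists_finite_subset_coreUnion_isolation_union_le
    (hloc : ∀ v : V, (G.neighborSet v).Finite) {S F : Set V} (hS : S.Finite) (hF : F.Finite)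
    (hFA : F ⊆ coreUnion G q) :
    ∃ A, A.Finite ∧ F ⊆ A ∧ A ⊆ coreUnion G q ∧
      isolation G q (A ∪ S) ≤ isolation G q A := by
  obtain ⟨U, hU, hFU, hUA, hUabs⟩ :=
    exists_finite_superset_forall_isolation_le_union hloc hF hFA
  obtain ⟨M, hMW, hM, hMmax⟩ := exists_isIsolatedCore_forall_isolation_le (G := G) (q := q)
    (hS.union hU)
  refine ⟨M ∪ U, hM.1.union hU, hFU.trans Set.subset_union_right,
    Set.union_subset hM.subset_coreUnion hUA, ?_⟩
  calc isolation G q (M ∪ U ∪ S)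
      ≤ isolation G q M :=
        hMmax _ (Set.union_subset (Set.union_subset hMW Set.subset_union_right)
          Set.subset_union_left)
    _ ≤ isolation G q (M ∪ U) := hUabs M hM.1

theorem mul_ncard_add_two_mul_ncard_edgesBetween_coreUnion_le
    (hloc : ∀ v : V, (G.neighborSet v).Finite) {S : Set V} (hS : S.Finite)
    (hSA : Disjoint S (coreUnion G q)) :
    q * S.ncard + 2 * (edgesBetween G S (coreUnion G q)).ncard ≤ (edgeBdry G S).ncard := by
  obtain ⟨A, hA, hNA, hAcore, hiso⟩ := exists_finite_subset_coreUnion_isolation_union_le hloc hS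
    ((hS.biUnion fun x _ => hloc x).inter_of_left (coreUnion G q)) Set.inter_subset_right
  have hsub : edgesBetween G S (coreUnion G q) ⊆ edgesBetween G S A := by
    rintro _ ⟨he, x, hx, y, hy, rfl⟩
    exact ⟨he, x, hx, y, hNA ⟨Set.mem_biUnion hx he, hy⟩, rfl⟩
  have hcard : ((edgesBetween G S (coreUnion G q)).ncard : ℝ) ≤ (edgesBetween G S A).ncard := by
    exact_mod_cast Set.ncard_le_ncard hsub (edgesBetween_finite hloc hS A)
  have := mul_ncard_add_two_mul_ncard_edgesBetween_le_of_isolation_union_le hloc hA hS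
    (hSA.symm.mono_left hAcore) hiso
  linarith

end

theorem stmt10_general (T : SimpleGraph V) (htree : T.IsTree)
    (hloc : ∀ v : V, (T.neighborSet v).Finite)
    (q : ℝ) (hq0 : 0 < q) (hq2 : q ≤ 2) (S : Set V)
    (hSfin : S.Finite) (hdisj : S ∩ coreUnion T q = ∅) :
    q * (∑ x ∈ hSfin.toFinset, ((T.neighborSet x).ncard : ℝ)) ≤
      (q + 2) *
        (({e : Sym2 V | e ∈ T.edgeSet ∧
            ∃ x ∈ S, ∃ y ∉ S ∪ coreUnion T q, e = s(x, y)}.ncard : ℝ)) := by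
  set A := coreUnion T q
  change _ ≤ (q + 2) * ((edgesBetween T S (S ∪ A)ᶜ).ncard : ℝ)
  have hdeg : ∑ x ∈ hSfin.toFinset, ((T.neighborSet x).ncard : ℝ) ≤
      2 * S.ncard + (edgeBdry T S).ncard := by
    exact_mod_cast sum_ncard_neighborSet_le_of_isAcyclic hloc htree.isAcyclic hSfin
  have hcore := mul_ncard_add_two_mul_ncard_edgesBetween_coreUnion_le hloc hSfin
    (Set.disjoint_iff_inter_eq_empty.mpr hdisj)
  have hbdry : ((edgeBdry T S).ncard : ℝ) ≤
      (edgesBetween T S (S ∪ A)ᶜ).ncard + (edgesBetween T S A).ncard := by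
    exact_mod_cast (Set.ncard_le_ncard (edgeBdry_subset_union_edgesBetween S A)
      ((edgesBetween_finite hloc hSfin _).union
      (edgesBetween_finite hloc hSfin _))).trans (Set.ncard_union_le _ _)
  linarith [mul_le_mul_of_nonneg_left hdeg hq0.le,
    mul_le_mul_of_nonneg_left hbdry (by linarith : (0 : ℝ) ≤ q + 2),
    mul_le_mul_of_nonneg_right hq2 (Nat.cast_nonneg (α := ℝ) (edgesBetween T S A).ncard)]

/-- Let `q ∈ (0, 2]`, let `T` be an infinite tree in which every vertex has finite degree,
and let `S` be a nonempty finite vertex subset of `T` with `S ∩ A_q = ∅`. Then the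
`q`-oceans `T ∖ A_q` satisfy the isoperimetric inequality
`(q + 2)·|∂^{T∖A_q} S| ≥ q·Σ_{x∈S} deg_T(x)`, where `∂^{T∖A_q} S` denotes the set of
edges of `T` joining a vertex of `S` to a vertex of `T ∖ (S ∪ A_q)`. -/
theorem stmt10 (T : SimpleGraph V) [Infinite V] (htree : T.IsTree)
    (hloc : ∀ v : V, (T.neighborSet v).Finite)
    (q : ℝ) (hq0 : 0 < q) (hq2 : q ≤ 2) (S : Set V) (hSne : S.Nonempty)
    (hSfin : S.Finite) (hdisj : S ∩ coreUnion T q = ∅) :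
    q * (∑ x ∈ hSfin.toFinset, ((T.neighborSet x).ncard : ℝ)) ≤
      (q + 2) *
        (({e : Sym2 V | e ∈ T.edgeSet ∧
            ∃ x ∈ S, ∃ y ∉ S ∪ coreUnion T q, e = s(x, y)}.ncard : ℝ)) :=
  stmt10_general T htree hloc q hq0 hq2 S hSfin hdisj
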